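/- Suppose the torsion index t(G) is a unit in the coefficient ring k, so that Schubert polynomials (𝔖_w)_{w∈W} form a basis of S_k as an (S^W)_k-module and D_k = End_{(S^W)_k}(S_k). Define ψ ∈ D_k by ψ(u) = ∂_{w_0}(𝔖_{w_0} u). Then for any left D_k-module A, ψ is a projection of A onto the (S^W)_k-submodule A^{I(D_k)}: ψ(A) = A^{I(D_k)} and ψ² = ψ. -/

import Mathlib

open MvPolynomial

/-- The linear polynomial in `Sym(X(T)) ≅ ℤ[x₁,…,x_r]` corresponding to a lattice
element `v ∈ X(T) ≅ ℤ^r`. -/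
noncomputable def lin {r : ℕ} (v : Fin r → ℤ) : MvPolynomial (Fin r) ℤ :=
  ∑ i, C (v i) * X i

/-- The algebra endomorphism of `Sym(X(T))` induced by a lattice endomorphism. -/
noncomputable def act {r : ℕ} (σ : Module.End ℤ (Fin r → ℤ)) :
    MvPolynomial (Fin r) ℤ →ₐ[ℤ] MvPolynomial (Fin r) ℤ :=
  aeval fun i => lin (σ (Pi.single i 1))

/-- A (reduced, crystallographic) root system datum in the character lattice
`X(T) ≅ ℤ^r`: roots, a positive system, a simple system, and integral coroots. -/
structure RootSystemData (r : ℕ) where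
  R : Finset (Fin r → ℤ)
  pos : Finset (Fin r → ℤ)
  simple : Finset (Fin r → ℤ)
  coroot : (Fin r → ℤ) → ((Fin r → ℤ) →ₗ[ℤ] ℤ)
  ne_zero : ∀ α ∈ R, α ≠ (0 : Fin r → ℤ)
  coroot_self : ∀ α ∈ R, coroot α α = 2
  neg_mem : ∀ α ∈ R, -α ∈ R
  reduced : ∀ α ∈ R, (2 : ℤ) • α ∉ R
  pos_subset : pos ⊆ R
  pos_total : ∀ α ∈ R, α ∈ pos ∨ -α ∈ pos
  pos_asymm : ∀ α ∈ pos, -α ∉ pos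
  simple_subset : simple ⊆ pos
  simple_indep : LinearIndependent ℤ ((↑) : {x : Fin r → ℤ // x ∈ simple} → (Fin r → ℤ))
  simple_gen : ∀ α ∈ pos, ∃ c : (Fin r → ℤ) → ℕ, α = ∑ β ∈ simple, c β • β
  root_perm : ∀ α ∈ R, ∀ β ∈ R, β - coroot α β • α ∈ R

/-- The reflection `s_α : v ↦ v - ⟨v,α^∨⟩α` of the lattice associated to a root. -/
noncomputable def reflL {r : ℕ} (P : RootSystemData r) (α : Fin r → ℤ) :
    Module.End ℤ (Fin r → ℤ) :=
  LinearMap.id - LinearMap.smulRight (P.coroot α) α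

/-- The Weyl group `W`, i.e. the monoid of lattice endomorphisms generated by all
the reflections `s_α`, `α ∈ R` (each reflection is an involution, so this is in
fact a group). -/
def weyl {r : ℕ} (P : RootSystemData r) : Submonoid (Module.End ℤ (Fin r → ℤ)) :=
  Submonoid.closure ((fun α => reflL P α) '' ↑P.R)

/-- The length `ℓ(σ)` of a Weyl group element: the minimal length of a word in the
simple reflections representing it. -/
noncomputable def len {r : ℕ} (P : RootSystemData r) (σ : Module.End ℤ (Fin r → ℤ)) : ℕ :=
  sInf {n | ∃ l : List (Fin r → ℤ), (∀ β ∈ l, β ∈ P.simple) ∧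
    (l.map (reflL P)).prod = σ ∧ l.length = n}

/-- The linear polynomial in `S_k = Sym(X(T)) ⊗ k` corresponding to a lattice element. -/
noncomputable def link {r : ℕ} (k : Type) [CommRing k] (v : Fin r → ℤ) :
    MvPolynomial (Fin r) k :=
  ∑ i, C ((v i : ℤ) : k) * X i

/-- The algebra endomorphism of `S_k` induced by a lattice endomorphism. -/
noncomputable def actk {r : ℕ} (k : Type) [CommRing k] (σ : Module.End ℤ (Fin r → ℤ)) :
    MvPolynomial (Fin r) k →ₐ[k] MvPolynomial (Fin r) k :=
  aeval fun i => link k (σ (Pi.single i 1))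

/-- The base-change map `S = Sym(X(T)) → S_k = Sym(X(T)) ⊗ k`. -/
noncomputable def ιk {r : ℕ} (k : Type) [CommRing k] :
    MvPolynomial (Fin r) ℤ →+* MvPolynomial (Fin r) k :=
  MvPolynomial.map (Int.castRingHom k)

namespace Aux13
variable {r : ℕ}

lemma lin_add (v w : Fin r → ℤ) : lin (v + w) = lin v + lin w := by
  simp [lin, Finset.sum_add_distrib, add_mul]

lemma lin_smul (c : ℤ) (v : Fin r → ℤ) : lin (c • v) = C c * lin v := by
  simp [lin, Finset.mul_sum, mul_assoc]

lemma lin_neg (v : Fin r → ℤ) : lin (-v) = - lin v := by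
  have := lin_smul (r := r) (-1) v
  simpa using this

lemma lin_single (i : Fin r) : lin (Pi.single i (1:ℤ)) = X i := by
  rw [lin, Finset.sum_eq_single i (fun j _ hj => by simp [Pi.single_apply, hj])
    (by simp)]
  simp

lemma act_X (σ : Module.End ℤ (Fin r → ℤ)) (i : Fin r) :
    act σ (X i) = lin (σ (Pi.single i 1)) := by simp [act]

lemma lin_zero : lin (0 : Fin r → ℤ) = 0 := by simp [lin]

lemma lin_sum {ι : Type*} (s : Finset ι) (f : ι → (Fin r → ℤ)) :
    lin (∑ i ∈ s, f i) = ∑ i ∈ s, lin (f i) := by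
  induction s using Finset.cons_induction with
  | empty => simp [lin_zero]
  | cons i s his ih => rw [Finset.sum_cons, Finset.sum_cons, lin_add, ih]

lemma act_lin (σ : Module.End ℤ (Fin r → ℤ)) (v : Fin r → ℤ) :
    act σ (lin v) = lin (σ v) := by
  have hv : σ v = ∑ i, (v i) • σ (Pi.single i (1:ℤ)) := by
    have : v = ∑ i, (v i) • Pi.single i (1:ℤ) := by
      conv_lhs => rw [← Finset.univ_sum_single v]
      exact Finset.sum_congr rfl fun i _ => by simp [← Pi.single_smul]
    conv_lhs => rw [this]
    rw [map_sum]
    exact Finset.sum_congr rfl fun i _ => by rw [map_smul]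
  rw [lin, map_sum, hv, lin_sum]
  refine Finset.sum_congr rfl fun i _ => ?_
  rw [map_mul, act_X, lin_smul]
  congr 1
  simp [act]

lemma act_comp (σ τ : Module.End ℤ (Fin r → ℤ)) (u : MvPolynomial (Fin r) ℤ) :
    act σ (act τ u) = act (σ * τ) u := by
  have : (act σ).comp (act τ) = act (σ * τ) := by
    apply MvPolynomial.algHom_ext
    intro i
    simp [act_X, act_lin, Module.End.mul_apply]
  exact AlgHom.congr_fun this u

lemma act_one (u : MvPolynomial (Fin r) ℤ) : act (1 : Module.End ℤ (Fin r → ℤ)) u = u := by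
  have : act (1 : Module.End ℤ (Fin r → ℤ)) = AlgHom.id ℤ _ := by
    apply MvPolynomial.algHom_ext
    intro i
    simp [act_X, lin_single, Module.End.one_apply]
  rw [this]; simp

lemma reflL_apply (P : RootSystemData r) (α v : Fin r → ℤ) :
    reflL P α v = v - P.coroot α v • α := by
  simp [reflL]

lemma reflL_root (P : RootSystemData r) {α : Fin r → ℤ} (hα : α ∈ P.R) :
    reflL P α α = -α := by
  rw [reflL_apply, P.coroot_self α hα]
  module

lemma reflL_sq (P : RootSystemData r) {α : Fin r → ℤ} (hα : α ∈ P.R) :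
    reflL P α * reflL P α = 1 := by
  apply LinearMap.ext
  intro v
  rw [Module.End.mul_apply, reflL_apply, reflL_apply, map_sub, map_smul,
    P.coroot_self α hα, Module.End.one_apply]
  simp only [smul_eq_mul]
  module

lemma reflL_mem_weyl (P : RootSystemData r) {α : Fin r → ℤ} (hα : α ∈ P.R) :
    reflL P α ∈ weyl P :=
  Submonoid.subset_closure ⟨α, by simpa using hα, rfl⟩

lemma weyl_root (P : RootSystemData r) {σ : Module.End ℤ (Fin r → ℤ)}
    (hσ : σ ∈ weyl P) : ∀ γ ∈ P.R, σ γ ∈ P.R := by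
  induction hσ using Submonoid.closure_induction with
  | mem x hx =>
      obtain ⟨α, hα, rfl⟩ := hx
      intro γ hγ
      rw [reflL_apply]
      exact P.root_perm α (by simpa using hα) γ hγ
  | one => intro γ hγ; simpa using hγ
  | mul x y hx hy ihx ihy =>
      intro γ hγ
      rw [Module.End.mul_apply]
      exact ihx _ (ihy _ hγ)

lemma weyl_inv (P : RootSystemData r) {σ : Module.End ℤ (Fin r → ℤ)}
    (hσ : σ ∈ weyl P) : ∃ σ', σ' ∈ weyl P ∧ σ * σ' = 1 ∧ σ' * σ = 1 := by
  induction hσ using Submonoid.closure_induction with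
  | mem x hx =>
      obtain ⟨α, hα, rfl⟩ := hx
      exact ⟨reflL P α, reflL_mem_weyl P (by simpa using hα),
        reflL_sq P (by simpa using hα), reflL_sq P (by simpa using hα)⟩
  | one => exact ⟨1, one_mem _, one_mul 1, one_mul 1⟩
  | mul x y hx hy ihx ihy =>
      obtain ⟨x', hx', hxx', hx'x⟩ := ihx
      obtain ⟨y', hy', hyy', hy'y⟩ := ihy
      refine ⟨y' * x', mul_mem hy' hx', ?_, ?_⟩
      · rw [mul_assoc, ← mul_assoc y y', hyy', one_mul, hxx']
      · rw [mul_assoc, ← mul_assoc x' x, hx'x, one_mul, hy'y]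


lemma natsmul_eq (n : ℕ) (v : Fin r → ℤ) : n • v = (n : ℤ) • v := by
  simp

lemma simple_refl_pos (P : RootSystemData r) {δ α : Fin r → ℤ}
    (hδ : δ ∈ P.simple) (hα : α ∈ P.pos) (h : reflL P δ α ∉ P.pos) : α = δ := by
  classical
  have hδp : δ ∈ P.pos := P.simple_subset hδ
  have hδR : δ ∈ P.R := P.pos_subset hδp
  have hαR : α ∈ P.R := P.pos_subset hα
  have hsR : reflL P δ α ∈ P.R := by
    rw [reflL_apply]
    exact P.root_perm δ hδR α hαR
  have hneg : -(reflL P δ α) ∈ P.pos := (P.pos_total _ hsR).resolve_left h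
  obtain ⟨c, hc⟩ := P.simple_gen α hα
  obtain ⟨d, hd⟩ := P.simple_gen _ hneg
  set m : ℤ := P.coroot δ α with hm
  have key : ∑ β ∈ P.simple, (((c β : ℤ) + (d β : ℤ)) - (if β = δ then m else 0)) • β = 0 := by
    have h1 : α + -(reflL P δ α) = m • δ := by
      rw [reflL_apply]; module
    have h2 : ∑ β ∈ P.simple, ((c β : ℤ) + (d β : ℤ)) • β = m • δ := by
      calc ∑ β ∈ P.simple, ((c β : ℤ) + (d β : ℤ)) • β
          = ∑ β ∈ P.simple, (c β • β + d β • β) :=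
            Finset.sum_congr rfl fun β _ => by rw [add_smul, ← natsmul_eq, ← natsmul_eq]
        _ = (∑ β ∈ P.simple, c β • β) + ∑ β ∈ P.simple, d β • β := Finset.sum_add_distrib
        _ = α + -(reflL P δ α) := by rw [← hc, ← hd]
        _ = m • δ := h1
    have h3 : ∑ β ∈ P.simple, (if β = δ then m else 0 : ℤ) • β = m • δ := by
      rw [Finset.sum_congr rfl (fun β _ => by rw [ite_smul, zero_smul]),
        Finset.sum_ite_eq' P.simple δ (fun β => m • β), if_pos hδ]
    rw [Finset.sum_congr rfl (fun β _ => sub_smul _ _ β), Finset.sum_sub_distrib, h2, h3, sub_self]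
  have hzero : ∀ β ∈ P.simple, ((c β : ℤ) + (d β : ℤ)) - (if β = δ then m else 0) = 0 := by
    have hli := linearIndependent_iff'.mp P.simple_indep Finset.univ
      (fun i => ((c ↑i : ℤ) + (d ↑i : ℤ)) - (if ↑i = δ then m else 0))
    intro β hβ
    have : ∑ i : {x // x ∈ P.simple},
        ((((c ↑i : ℤ) + (d ↑i : ℤ)) - (if ↑i = δ then m else 0)) • (↑i : Fin r → ℤ)) = 0 := by
      rw [Finset.univ_eq_attach, Finset.sum_attach P.simple
        (fun β => (((c β : ℤ) + (d β : ℤ)) - (if β = δ then m else 0)) • β)]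
      exact key
    exact hli this ⟨β, hβ⟩ (Finset.mem_univ _)
  have hcz : ∀ β ∈ P.simple, β ≠ δ → c β = 0 := by
    intro β hβ hne
    have := hzero β hβ
    rw [if_neg hne] at this
    omega
  have hαδ : α = (c δ : ℤ) • δ := by
    rw [hc, Finset.sum_eq_single_of_mem δ hδ
      (fun β hβ hne => by rw [hcz β hβ hne, zero_smul]), natsmul_eq]
  have hcδ : c δ ≠ 0 := by
    intro h0
    rw [h0] at hαδ
    exact P.ne_zero α hαR (by simpa using hαδ)
  have h2 : (c δ : ℤ) * P.coroot α δ = 2 := by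
    have h4 := P.coroot_self α hαR
    nth_rewrite 2 [hαδ] at h4
    rw [map_smul, smul_eq_mul] at h4
    exact h4
  have hdvd : (c δ : ℤ) ∣ 2 := ⟨P.coroot α δ, h2.symm⟩
  have hdvd' : c δ ∣ 2 := by exact_mod_cast hdvd
  rcases (Nat.dvd_prime Nat.prime_two).mp hdvd' with h1 | h1
  · rw [h1] at hαδ; simpa using hαδ
  · exfalso
    rw [h1] at hαδ
    push_cast at hαδ
    exact P.reduced δ hδR (hαδ ▸ hαR)


lemma refl_conj (P : RootSystemData r) (hfin : ((weyl P : Set (Module.End ℤ (Fin r → ℤ)))).Finite)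
    {u u' : Module.End ℤ (Fin r → ℤ)} (hu : u ∈ weyl P) (hu' : u' ∈ weyl P)
    (huu' : u * u' = 1) (hu'u : u' * u = 1) {β : Fin r → ℤ} (hβ : β ∈ P.R) :
    reflL P (u β) * u = u * reflL P β := by
  classical
  set γ : Fin r → ℤ := u β with hγdef
  have hγ : γ ∈ P.R := weyl_root P hu β hβ
  have hu'γ : u' γ = β := by
    have : u' (u β) = (u' * u) β := rfl
    rw [hγdef, this, hu'u, Module.End.one_apply]
  set s' : Module.End ℤ (Fin r → ℤ) := u * reflL P β * u' with hs'def
  have hs'w : s' ∈ weyl P := mul_mem (mul_mem hu (reflL_mem_weyl P hβ)) hu'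
  have hs's' : s' * s' = 1 := by
    rw [hs'def]
    simp only [mul_assoc]
    rw [← mul_assoc u' u, hu'u, one_mul, ← mul_assoc (reflL P β), reflL_sq P hβ, one_mul, huu']
  have hs'app : ∀ v, s' v = v - P.coroot β (u' v) • γ := by
    intro v
    rw [hs'def]
    simp only [Module.End.mul_apply]
    rw [reflL_apply, map_sub, map_smul]
    have : u (u' v) = v := by
      have : u (u' v) = (u * u') v := rfl
      rw [this, huu', Module.End.one_apply]
    rw [this, hγdef]
  set t : Module.End ℤ (Fin r → ℤ) := reflL P γ * s' with htdef
  have htw : t ∈ weyl P := mul_mem (reflL_mem_weyl P hγ) hs'w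
  set d : (Fin r → ℤ) → ℤ := fun v => P.coroot β (u' v) - P.coroot γ v with hddef
  have hdγ : d γ = 0 := by
    simp only [hddef, hu'γ, P.coroot_self β hβ, P.coroot_self γ hγ, sub_self]
  have htapp : ∀ v, t v = v + d v • γ := by
    intro v
    rw [htdef, Module.End.mul_apply, hs'app, reflL_apply, map_sub, map_smul,
      P.coroot_self γ hγ, hddef]
    simp only [smul_eq_mul]
    module
  have hdt : ∀ v, d (t v) = d v := by
    intro v
    rw [htapp, hddef]
    simp only [map_add, map_smul, hu'γ, smul_eq_mul, P.coroot_self β hβ,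
      P.coroot_self γ hγ]
    ring
  have htn : ∀ (n : ℕ) (v), (t ^ n) v = v + ((n : ℤ) * d v) • γ := by
    intro n
    induction n with
    | zero => intro v; simp
    | succ n ih =>
        intro v
        rw [pow_succ, Module.End.mul_apply, ih (t v), htapp,
          show d (v + d v • γ) = d v from by rw [← htapp v]; exact hdt v]
        push_cast
        module
  have hd0 : ∀ v, d v = 0 := by
    by_contra hcon
    push_neg at hcon
    obtain ⟨v, hv⟩ := hcon
    obtain ⟨j, hj⟩ : ∃ j, γ j ≠ 0 := Function.ne_iff.mp (P.ne_zero γ hγ)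
    obtain ⟨n, -, m, -, hnm, heq⟩ :=
      Set.infinite_univ.exists_ne_map_eq_of_mapsTo
        (f := fun n : ℕ => t ^ n) (fun n _ => pow_mem htw n) hfin
    have h2 : ((n : ℤ) * d v) * γ j = ((m : ℤ) * d v) * γ j := by
      have hfun : (t ^ n) v = (t ^ m) v := by rw [heq]
      rw [htn, htn] at hfun
      have h5 := congrFun hfun j
      simp only [Pi.add_apply, Pi.smul_apply, smul_eq_mul] at h5
      exact add_left_cancel h5
    have : (n : ℤ) = m := by
      have h3 : ((n : ℤ) - m) * (d v * γ j) = 0 := by linear_combination h2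
      rcases mul_eq_zero.mp h3 with h | h
      · linarith
      · rcases mul_eq_zero.mp h with h' | h'
        · exact absurd h' hv
        · exact absurd h' hj
    exact hnm (by exact_mod_cast this)
  have ht1 : t = 1 := by
    apply LinearMap.ext
    intro v
    rw [htapp, hd0, zero_smul, add_zero, Module.End.one_apply]
  have hrs' : reflL P γ = s' := by
    have : t * s' = s' := by rw [ht1, one_mul]
    calc reflL P γ = reflL P γ * (s' * s') := by rw [hs's', mul_one]
      _ = t * s' := by rw [htdef, ← mul_assoc]
      _ = s' := this
  rw [hrs', hs'def, mul_assoc, hu'u, mul_one]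

lemma exchange (P : RootSystemData r) (hfin : ((weyl P : Set (Module.End ℤ (Fin r → ℤ)))).Finite)
    (l : List (Fin r → ℤ)) (hl : ∀ β ∈ l, β ∈ P.simple) {β : Fin r → ℤ} (hβ : β ∈ P.simple)
    (hneg : (l.map (reflL P)).prod β ∉ P.pos) :
    ∃ l' : List (Fin r → ℤ), (∀ δ ∈ l', δ ∈ P.simple) ∧
      (l'.map (reflL P)).prod = (l.map (reflL P)).prod * reflL P β ∧
      l'.length + 1 = l.length := by
  have hβR : β ∈ P.R := P.pos_subset (P.simple_subset hβ)
  induction l with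
  | nil =>
      exfalso
      simp only [List.map_nil, List.prod_nil, Module.End.one_apply] at hneg
      exact hneg (P.simple_subset hβ)
  | cons δ l ih =>
      have hδ : δ ∈ P.simple := hl δ (List.mem_cons_self)
      have hl' : ∀ b ∈ l, b ∈ P.simple := fun b hb => hl b (List.mem_cons_of_mem δ hb)
      have hlw : (l.map (reflL P)).prod ∈ weyl P := by
        apply Submonoid.list_prod_mem
        intro x hx
        obtain ⟨b, hb, rfl⟩ := List.mem_map.mp hx
        exact reflL_mem_weyl P (P.pos_subset (P.simple_subset (hl' b hb)))
      rw [List.map_cons, List.prod_cons] at hneg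
      by_cases hcase : (l.map (reflL P)).prod β ∈ P.pos
      · -- transition here: reflL δ ((prod l) β) ∉ pos, (prod l) β ∈ pos ⟹ (prod l) β = δ
        have hklβ : reflL P δ ((l.map (reflL P)).prod β) ∉ P.pos := by
          simpa only [Module.End.mul_apply] using hneg
        have heq : (l.map (reflL P)).prod β = δ := simple_refl_pos P hδ hcase hklβ
        obtain ⟨u', hu', huu', hu'u⟩ := weyl_inv P hlw
        have hconj := refl_conj P hfin hlw hu' huu' hu'u hβR
        rw [heq] at hconj
        refine ⟨l, hl', ?_, by simp⟩
        rw [List.map_cons, List.prod_cons, mul_assoc, ← hconj, ← mul_assoc,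
          reflL_sq P (P.pos_subset (P.simple_subset hδ)), one_mul]
      · obtain ⟨l'', hl'', hp'', hlen''⟩ := ih hl' hcase
        refine ⟨δ :: l'', ?_, ?_, by simp [← hlen'']⟩
        · intro b hb
          rcases List.mem_cons.mp hb with rfl | hb
          · exact hδ
          · exact hl'' b hb
        · rw [List.map_cons, List.prod_cons, hp'', List.map_cons, List.prod_cons, mul_assoc]


variable (k : Type) [CommRing k]

lemma link_eq (v : Fin r → ℤ) : link k v = ιk k (lin v) := by
  rw [link, lin, map_sum]
  exact Finset.sum_congr rfl fun i _ => by rw [map_mul, ιk, map_C, map_X]; norm_num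

lemma ιk_act (σ : Module.End ℤ (Fin r → ℤ)) (u : MvPolynomial (Fin r) ℤ) :
    ιk k (act σ u) = actk k σ (ιk k u) := by
  induction u using MvPolynomial.induction_on with
  | C a =>
      rw [show act σ (C a) = C a from by simp [act, algebraMap_eq]]
      rw [ιk, map_C]
      simp [actk, algebraMap_eq]
  | add p q hp hq => rw [map_add, map_add, map_add, hp, hq, map_add]
  | mul_X p i hp =>
      rw [map_mul, map_mul, hp, map_mul, map_mul]
      congr 1
      rw [act_X, ← link_eq, show (ιk k) (X i) = X i from by rw [ιk, map_X]]
      simp [actk]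

lemma span_ιk : Submodule.span k (Set.range (⇑(ιk k (r := r)))) = ⊤ := by
  rw [Submodule.eq_top_iff']
  intro p
  rw [as_sum p]
  apply Submodule.sum_mem
  intro m _
  have h1 : (monomial m) (coeff m p) = coeff m p • ιk k (monomial m 1) := by
    rw [ιk, map_monomial, smul_monomial]
    norm_num
  rw [h1]
  exact Submodule.smul_mem _ _ (Submodule.subset_span ⟨monomial m 1, rfl⟩)

lemma ext_ιk {f g : Module.End k (MvPolynomial (Fin r) k)}
    (h : ∀ u, f (ιk k u) = g (ιk k u)) : f = g := by
  apply LinearMap.ext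
  intro p
  have hp : p ∈ Submodule.span k (Set.range (⇑(ιk k (r := r)))) := by
    rw [span_ιk]; trivial
  induction hp using Submodule.span_induction with
  | mem x hx => obtain ⟨u, rfl⟩ := hx; exact h u
  | zero => rw [map_zero, map_zero]
  | add x y hx hy ihx ihy => rw [map_add, map_add, ihx, ihy]
  | smul a x hx ihx => rw [map_smul, map_smul, ihx]

end Aux13

open Aux13

set_option synthInstance.maxHeartbeats 1000000
set_option maxHeartbeats 1000000

/-- Assume (consequences of the torsion index `t(G)` being a
unit in `k`) that the Schubert polynomials `𝔖_w = ∂_{w⁻¹w₀}(𝔖)` form a basis of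
`S_k` over `(S^W)_k` and that `D_k = End_{(S^W)_k}(S_k)`.  Define `ψ ∈ D_k` by
`ψ(u) = ∂_{w₀}(𝔖_{w₀} u)` (here `Stop = 𝔖_{w₀}`, normalized so that
`∂_{w₀}(𝔖_{w₀}) = 𝔖_1 = 1`).  Then for every left `D_k`-module `M`, `ψ` is a
projection of `M` onto the submodule of `I(D_k)`-invariants
`M^{I(D_k)} = {m : Δm = 0 ∀ Δ ∈ D_k with Δ(1) = 0}`:  `ψ(M) ⊆ M^{I(D_k)}`,
`ψ` restricts to the identity on `M^{I(D_k)}`, and `ψ² = ψ`. -/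
theorem statement13 {r : ℕ} (P : RootSystemData r) (k : Type) [CommRing k]
    (hsimp : weyl P = Submonoid.closure ((fun β => reflL P β) '' ↑P.simple))
    (hex : ∀ σ ∈ weyl P, ∃ l : List (Fin r → ℤ),
      (∀ β ∈ l, β ∈ P.simple) ∧ (l.map (reflL P)).prod = σ)
    (W : Finset (Module.End ℤ (Fin r → ℤ)))
    (hW : (W : Set (Module.End ℤ (Fin r → ℤ))) = (weyl P : Set (Module.End ℤ (Fin r → ℤ))))
    (D : (Fin r → ℤ) → MvPolynomial (Fin r) ℤ → MvPolynomial (Fin r) ℤ)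
    (hD : ∀ γ ∈ P.R, ∀ u, lin γ * D γ u = u - act (reflL P γ) u)
    (Dk : (Fin r → ℤ) → Module.End k (MvPolynomial (Fin r) k))
    (hcompat : ∀ γ ∈ P.R, ∀ u : MvPolynomial (Fin r) ℤ,
      Dk γ (ιk k u) = ιk k (D γ u))
    (Dwk : Module.End ℤ (Fin r → ℤ) → Module.End k (MvPolynomial (Fin r) k))
    (hDwk : ∀ (σ : Module.End ℤ (Fin r → ℤ)) (l : List (Fin r → ℤ)),
      (∀ β ∈ l, β ∈ P.simple) → (l.map (reflL P)).prod = σ → l.length = len P σ →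
      Dwk σ = (l.map Dk).prod)
    (w0 : Module.End ℤ (Fin r → ℤ)) (hw0W : w0 ∈ W)
    (hw0 : ∀ α ∈ P.pos, -(w0 α) ∈ P.pos)
    (Stop : MvPolynomial (Fin r) k)
    (h1 : Dwk w0 Stop = 1)
    (Sch : Module.End ℤ (Fin r → ℤ) → MvPolynomial (Fin r) k)
    (hSch : ∀ w ∈ W, ∀ σ ∈ W, σ * w = w0 → Sch w = Dwk σ Stop)
    (hbasis : ∀ u : MvPolynomial (Fin r) k,
      ∃! c : {w // w ∈ W} → MvPolynomial (Fin r) k,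
        (∀ w, c w ∈ Set.range fun vc : {v : MvPolynomial (Fin r) ℤ // ∀ σ ∈ W, act σ v = v} =>
          ιk k ↑vc) ∧ u = ∑ w : {w // w ∈ W}, c w * Sch ↑w)
    (A : Subalgebra k (Module.End k (MvPolynomial (Fin r) k)))
    (hA : A = Algebra.adjoin k
      ({T' | ∃ u : MvPolynomial (Fin r) k, T' = LinearMap.mulLeft k u} ∪
        {T' | ∃ α ∈ P.R, T' = Dk α}))
    (ψA : A)
    (hψA : ∀ u : MvPolynomial (Fin r) k,
      (ψA : Module.End k (MvPolynomial (Fin r) k)) u = Dwk w0 (Stop * u))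
    (wA : (w : Module.End ℤ (Fin r → ℤ)) → w ∈ W → A)
    (hwA : ∀ (w : Module.End ℤ (Fin r → ℤ)) (hw : w ∈ W),
      ((wA w hw : A) : Module.End k (MvPolynomial (Fin r) k)) = (actk k w).toLinearMap)
    (hEnd : ∀ T : Module.End k (MvPolynomial (Fin r) k),
      (∀ v : MvPolynomial (Fin r) ℤ, (∀ σ ∈ W, act σ v = v) →
        ∀ u, T (ιk k v * u) = ιk k v * T u) → T ∈ A) :
    ∀ (M : Type) [AddCommGroup M] [Module A M],
      (∀ m : M, ∀ T : A, (T : Module.End k (MvPolynomial (Fin r) k)) 1 = 0 →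
        T • (ψA • m) = 0) ∧
      (∀ m : M, (∀ T : A, (T : Module.End k (MvPolynomial (Fin r) k)) 1 = 0 →
        T • m = 0) → ψA • m = m) ∧
      (∀ m : M, ψA • ψA • m = ψA • m) := by
  classical
  intro M _ _
  have hmemW : ∀ {σ : Module.End ℤ (Fin r → ℤ)}, σ ∈ weyl P → σ ∈ W := by
    intro σ h
    rw [← Finset.mem_coe, hW]
    exact h
  have hmemW' : ∀ {σ : Module.End ℤ (Fin r → ℤ)}, σ ∈ W → σ ∈ weyl P := by
    intro σ h
    rw [← SetLike.mem_coe, ← hW]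
    exact h
  have hw0weyl : w0 ∈ weyl P := hmemW' hw0W
  have hfin : ((weyl P : Set (Module.End ℤ (Fin r → ℤ)))).Finite := hW ▸ W.finite_toSet
  have hsimpR : ∀ {β : Fin r → ℤ}, β ∈ P.simple → β ∈ P.R :=
    fun h => P.pos_subset (P.simple_subset h)
  have hinv : ∀ {v : MvPolynomial (Fin r) ℤ}, (∀ σ ∈ W, act σ v = v) →
      ∀ {γ : Fin r → ℤ}, γ ∈ P.R → act (reflL P γ) v = v := by
    intro v hv γ hγ
    exact hv _ (hmemW (reflL_mem_weyl P hγ))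
  -- cancellation over ℤ
  have hcan : ∀ {γ : Fin r → ℤ}, γ ∈ P.R → ∀ {a b : MvPolynomial (Fin r) ℤ},
      lin γ * a = lin γ * b → a = b := by
    intro γ hγ a b h
    have hne : lin γ ≠ 0 := by
      obtain ⟨j, hj⟩ := Function.ne_iff.mp (P.ne_zero γ hγ)
      intro h0
      have hev : eval (Pi.single j (1:ℤ)) (lin γ) = γ j := by
        rw [lin, map_sum,
          Finset.sum_congr rfl (fun i _ => by rw [map_mul, eval_C, eval_X, Pi.single_apply])]
        simp [mul_ite, Finset.sum_ite_eq' Finset.univ j (fun i => γ i)]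
      rw [h0] at hev
      simp at hev
      exact hj hev.symm
    exact mul_left_cancel₀ hne h
  -- ℤ-level Demazure facts
  have hsD : ∀ {γ : Fin r → ℤ}, γ ∈ P.R → ∀ u, act (reflL P γ) (D γ u) = D γ u := by
    intro γ hγ u
    apply hcan hγ
    have h0 := hD γ hγ u
    have h2 := congrArg (act (reflL P γ)) h0
    rw [map_mul, map_sub, act_comp, reflL_sq P hγ, act_one, act_lin, reflL_root P hγ,
      lin_neg] at h2
    linear_combination -h2 - h0
  have hDD : ∀ {γ : Fin r → ℤ}, γ ∈ P.R → ∀ u, D γ (D γ u) = 0 := by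
    intro γ hγ u
    apply hcan hγ
    rw [mul_zero, hD γ hγ, hsD hγ, sub_self]
  have hDmul : ∀ {γ : Fin r → ℤ}, γ ∈ P.R → ∀ {v}, act (reflL P γ) v = v →
      ∀ u, D γ (v * u) = v * D γ u := by
    intro γ hγ v hv u
    apply hcan hγ
    have h0 := hD γ hγ (v * u)
    rw [map_mul, hv] at h0
    linear_combination h0 - v * (hD γ hγ u)
  -- k-level facts
  have hK1 : ∀ {γ : Fin r → ℤ}, γ ∈ P.R → ∀ {v}, (∀ σ ∈ W, act σ v = v) →
      ∀ x, Dk γ (ιk k v * x) = ιk k v * Dk γ x := by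
    intro γ hγ v hv x
    have hkey : Dk γ * LinearMap.mulLeft k (ιk k v) = LinearMap.mulLeft k (ιk k v) * Dk γ := by
      apply ext_ιk
      intro u
      rw [Module.End.mul_apply, Module.End.mul_apply, LinearMap.mulLeft_apply,
        LinearMap.mulLeft_apply, ← map_mul, hcompat γ hγ, hcompat γ hγ, ← map_mul,
        hDmul hγ (hinv hv hγ) u]
    simpa only [Module.End.mul_apply, LinearMap.mulLeft_apply] using
      LinearMap.congr_fun hkey x
  have hK2 : ∀ {γ : Fin r → ℤ}, γ ∈ P.R → ∀ x, Dk γ (Dk γ x) = 0 := by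
    intro γ hγ x
    have hkey : Dk γ * Dk γ = 0 := by
      apply ext_ιk
      intro u
      rw [Module.End.mul_apply, hcompat γ hγ, hcompat γ hγ, hDD hγ, map_zero,
        LinearMap.zero_apply]
    simpa only [Module.End.mul_apply, LinearMap.zero_apply] using LinearMap.congr_fun hkey x
  -- reduced words
  have hred : ∀ σ ∈ weyl P, ∃ l : List (Fin r → ℤ), (∀ β ∈ l, β ∈ P.simple) ∧
      (l.map (reflL P)).prod = σ ∧ l.length = len P σ := by
    intro σ hσ
    obtain ⟨l, hl, hp⟩ := hex σ hσ
    have hne : {n | ∃ l : List (Fin r → ℤ), (∀ β ∈ l, β ∈ P.simple) ∧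
        (l.map (reflL P)).prod = σ ∧ l.length = n}.Nonempty := ⟨l.length, l, hl, hp, rfl⟩
    obtain ⟨l', hl', hp', hll'⟩ := Nat.sInf_mem hne
    exact ⟨l', hl', hp', hll'⟩
  have hlen1 : len P (1 : Module.End ℤ (Fin r → ℤ)) = 0 := by
    have h0 : 0 ∈ {n | ∃ l : List (Fin r → ℤ), (∀ β ∈ l, β ∈ P.simple) ∧
        (l.map (reflL P)).prod = (1 : Module.End ℤ (Fin r → ℤ)) ∧ l.length = n} :=
      ⟨[], by simp, by simp, rfl⟩
    exact Nat.eq_zero_of_le_zero (Nat.sInf_le h0)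
  have hDwk1 : Dwk 1 = 1 := by
    rw [hDwk 1 [] (by simp) (by simp) (by simp [hlen1])]
    simp
  -- products of Dk over words commute with invariants
  have hlistcomm : ∀ (l : List (Fin r → ℤ)), (∀ β ∈ l, β ∈ P.R) →
      ∀ {v}, (∀ σ ∈ W, act σ v = v) →
      ∀ x, ((l.map Dk).prod) (ιk k v * x) = ιk k v * ((l.map Dk).prod) x := by
    intro l
    induction l with
    | nil => intro _ v hv x; simp
    | cons β l ih =>
        intro hl v hv x
        rw [List.map_cons, List.prod_cons, Module.End.mul_apply, Module.End.mul_apply,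
          ih (fun b hb => hl b (List.mem_cons_of_mem β hb)) hv x,
          hK1 (hl β (List.mem_cons_self)) hv]
  have hDwkcomm : ∀ σ ∈ weyl P, ∀ {v}, (∀ τ ∈ W, act τ v = v) →
      ∀ x, Dwk σ (ιk k v * x) = ιk k v * Dwk σ x := by
    intro σ hσ v hv x
    obtain ⟨l, hl, hp, hlen⟩ := hred σ hσ
    rw [hDwk σ l hl hp hlen]
    exact hlistcomm l (fun b hb => hsimpR (hl b hb)) hv x
  -- ∂_{w0} ∘ ∂_β = 0
  have hw0β : ∀ {β : Fin r → ℤ}, β ∈ P.simple → ∀ x, Dwk w0 (Dk β x) = 0 := by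
    intro β hβ x
    have hβR : β ∈ P.R := hsimpR hβ
    obtain ⟨l, hl, hp, hlen⟩ := hred w0 hw0weyl
    have hw0βneg : (l.map (reflL P)).prod β ∉ P.pos := by
      rw [hp]
      intro hmem
      exact P.pos_asymm _ hmem (hw0 β (P.simple_subset hβ))
    obtain ⟨l1, hl1, hp1, hlen1'⟩ := exchange P hfin l hl hβ hw0βneg
    have hsβw : w0 * reflL P β ∈ weyl P := by
      rw [← hp, ← hp1]
      apply Submonoid.list_prod_mem
      intro x' hx'
      obtain ⟨b, hb, rfl⟩ := List.mem_map.mp hx'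
      exact reflL_mem_weyl P (hsimpR (hl1 b hb))
    have hlelen : len P ((l.map (reflL P)).prod * reflL P β) ≤ l1.length :=
      Nat.sInf_le ⟨l1, hl1, hp1, rfl⟩
    rw [hp] at hlelen
    obtain ⟨m, hm, hmp, hmlen⟩ := hred _ hsβw
    have hword : ((m ++ [β]).map (reflL P)).prod = w0 := by
      rw [List.map_append, List.prod_append, hmp]
      simp [mul_assoc, reflL_sq P hβR]
    have hmletters : ∀ b ∈ m ++ [β], b ∈ P.simple := by
      intro b hb
      rcases List.mem_append.mp hb with h | h
      · exact hm b h
      · rw [List.mem_singleton.mp h]; exact hβ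
    have hge : len P w0 ≤ m.length + 1 :=
      Nat.sInf_le ⟨m ++ [β], hmletters, hword, by simp⟩
    have heqlen : (m ++ [β]).length = len P w0 := by
      simp only [List.length_append, List.length_singleton]
      omega
    rw [hDwk w0 (m ++ [β]) hmletters hword heqlen, List.map_append, List.prod_append]
    simp only [List.map_cons, List.map_nil, List.prod_cons, List.prod_nil, mul_one]
    rw [Module.End.mul_apply, hK2 hβR x, map_zero]
  have hw0σ : ∀ σ ∈ weyl P, σ ≠ 1 → ∀ x, Dwk w0 (Dwk σ x) = 0 := by
    intro σ hσ hσ1 x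
    obtain ⟨l, hl, hp, hlen⟩ := hred σ hσ
    cases l with
    | nil =>
        exfalso
        simp only [List.map_nil, List.prod_nil] at hp
        exact hσ1 hp.symm
    | cons β l' =>
        rw [hDwk σ (β :: l') hl hp hlen, List.map_cons, List.prod_cons,
          Module.End.mul_apply, hw0β (hl β (List.mem_cons_self))]
  -- Dwk w0 on Schubert classes
  have hSchw0 : ∀ w ∈ W, Dwk w0 (Sch w) = if w = w0 then 1 else 0 := by
    intro w hw
    by_cases hww : w = w0
    · subst hww
      have h1W : (1 : Module.End ℤ (Fin r → ℤ)) ∈ W := hmemW (one_mem _)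
      rw [hSch w hw 1 h1W (one_mul w), hDwk1, if_pos rfl, Module.End.one_apply, h1]
    · obtain ⟨w', hw', hww', hw'w⟩ := weyl_inv P (hmemW' hw)
      have hσweyl : w0 * w' ∈ weyl P := mul_mem hw0weyl hw'
      have hσw : (w0 * w') * w = w0 := by rw [mul_assoc, hw'w, mul_one]
      have hσne : w0 * w' ≠ 1 := by
        intro hcon
        rw [hcon, one_mul] at hσw
        exact hww hσw
      rw [hSch w hw (w0 * w') (hmemW hσweyl) hσw, if_neg hww]
      exact hw0σ (w0 * w') hσweyl hσne Stop
  -- the image of ψ consists of invariants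
  have hpsi : ∀ u, ∃ v, (∀ σ ∈ W, act σ v = v) ∧
      (ψA : Module.End k (MvPolynomial (Fin r) k)) u = ιk k v := by
    intro u
    obtain ⟨c, ⟨hcr, hce⟩, -⟩ := hbasis (Stop * u)
    choose vf hvf using hcr
    refine ⟨(vf ⟨w0, hw0W⟩).val, (vf ⟨w0, hw0W⟩).2, ?_⟩
    rw [hψA u, hce, map_sum]
    have hterm : ∀ w : {w // w ∈ W}, Dwk w0 (c w * Sch ↑w) =
        if w = ⟨w0, hw0W⟩ then ιk k ↑(vf ⟨w0, hw0W⟩) else 0 := by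
      intro w
      rw [← hvf w, hDwkcomm w0 hw0weyl (vf w).2 (Sch ↑w), hSchw0 ↑w w.2]
      by_cases h : (↑w : Module.End ℤ (Fin r → ℤ)) = w0
      · have hw' : w = ⟨w0, hw0W⟩ := Subtype.ext h
        rw [hw']
        simp
      · rw [if_neg h, mul_zero, if_neg (fun hh => h (congrArg Subtype.val hh))]
    rw [Finset.sum_congr rfl (fun w _ => hterm w)]
    simp
  -- all elements of A commute with invariant multiplications
  have hTcomm : ∀ T, T ∈ A → ∀ v, (∀ σ ∈ W, act σ v = v) →
      ∀ x, T (ιk k v * x) = ιk k v * T x := by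
    intro T hT
    rw [hA] at hT
    induction hT using Algebra.adjoin_induction with
    | mem T' hT' =>
        intro v hv x
        rcases hT' with ⟨u, rfl⟩ | ⟨α, hα, rfl⟩
        · rw [LinearMap.mulLeft_apply, LinearMap.mulLeft_apply]; ring
        · exact hK1 hα hv x
    | algebraMap c =>
        intro v hv x
        rw [Module.algebraMap_end_apply, Module.algebraMap_end_apply, mul_smul_comm]
    | add f g hf hg ihf ihg =>
        intro v hv x
        rw [LinearMap.add_apply, LinearMap.add_apply, ihf v hv, ihg v hv, mul_add]
    | mul f g hf hg ihf ihg =>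
        intro v hv x
        rw [Module.End.mul_apply, Module.End.mul_apply, ihg v hv, ihf v hv]
  -- key: T(1) = 0 implies T ∘ ψ = 0
  have hTzero : ∀ T : A, (T : Module.End k (MvPolynomial (Fin r) k)) 1 = 0 →
      ∀ m : M, T • (ψA • m) = 0 := by
    intro T hT m
    have hmul : T * ψA = 0 := by
      apply Subtype.ext
      show (T : Module.End k (MvPolynomial (Fin r) k)) * (ψA : Module.End k _) = 0
      apply LinearMap.ext
      intro x
      obtain ⟨v, hv, hval⟩ := hpsi x
      rw [Module.End.mul_apply, hval, LinearMap.zero_apply]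
      have h2 := hTcomm ↑T T.2 v hv 1
      rw [mul_one, hT, mul_zero] at h2
      exact h2
    rw [← mul_smul, hmul, zero_smul]
  have hψ1 : ((ψA - 1 : A) : Module.End k (MvPolynomial (Fin r) k)) 1 = 0 := by
    have hco : ((ψA - 1 : A) : Module.End k (MvPolynomial (Fin r) k)) =
        (ψA : Module.End k (MvPolynomial (Fin r) k)) - 1 := by
      push_cast
      ring
    rw [hco, LinearMap.sub_apply, hψA 1, mul_one, h1, Module.End.one_apply, sub_self]
  refine ⟨fun m T hT => hTzero T hT m, ?_, ?_⟩
  · intro m hm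
    have h2 := hm (ψA - 1) hψ1
    have h4 := sub_smul ψA (1 : A) m
    rw [h4] at h2
    rwa [one_smul, sub_eq_zero] at h2
  · intro m
    have h2 := hTzero (ψA - 1) hψ1 m
    have h4 := sub_smul ψA (1 : A) (ψA • m)
    rw [h4] at h2
    rwa [one_smul, sub_eq_zero] at h2
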